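/- The map θ : Σ(P) → M is continuous and satisfies f(θ(q)) = θ(σ(q)) for all q ∈ Σ(P); that is, θ ∘ σ = f ∘ θ, so θ is a semiconjugacy from the shift σ on Σ(P) to f. -/

import Mathlib

/-! Expansivity pins the shadowing point down: two points whose orbits both `β`-shadow the
same sequence with `2β < ρ` coincide. The orbit of `f (θ q)` shadows `σ q`, which gives
`f ∘ θ = θ ∘ σ`. For continuity, compactness makes expansivity uniform: for every `ε` there
is `N` such that orbits `ρ`-close on `[-N, N]` start `ε`-close. Sequences that are
`(ρ - 2β)`-close on `[-N, N]` therefore have `ε`-close images under `θ`. -/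

open Set Filter Metric Topology

variable {M : Type*} [MetricSpace M] [CompactSpace M]

/-- `f` is expansive with expansivity constant `ρ`: if two orbits stay `ρ`-close for all
integer times, the points coincide. -/
def IsExpansiveWith (f : Equiv.Perm M) (ρ : ℝ) : Prop :=
  ∀ x y : M, (∀ n : ℤ, dist ((f ^ n) x) ((f ^ n) y) ≤ ρ) → x = y

/-- The stable set `W^s(x)`. -/
def stableSet (f : Equiv.Perm M) (x : M) : Set M :=
  {y : M | Tendsto (fun n : ℤ => dist ((f ^ n) x) ((f ^ n) y)) atTop (𝓝 0)}

/-- The unstable set `W^u(x)`. -/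
def unstableSet (f : Equiv.Perm M) (x : M) : Set M :=
  {y : M | Tendsto (fun n : ℤ => dist ((f ^ n) x) ((f ^ n) y)) atBot (𝓝 0)}

/-- The `ε`-stable set `W^s_ε(x)`. -/
def epsStable (f : Equiv.Perm M) (ε : ℝ) (x : M) : Set M :=
  {y : M | ∀ n : ℤ, 0 ≤ n → dist ((f ^ n) x) ((f ^ n) y) ≤ ε}

/-- The `ε`-unstable set `W^u_ε(x)`. -/
def epsUnstable (f : Equiv.Perm M) (ε : ℝ) (x : M) : Set M :=
  {y : M | ∀ n : ℤ, n ≤ 0 → dist ((f ^ n) x) ((f ^ n) y) ≤ ε}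

/-- Shadowing property: every `δ`-pseudo-orbit is `ε`-shadowed by a true orbit. -/
def HasShadowing (f : Equiv.Perm M) : Prop :=
  ∀ ε : ℝ, 0 < ε → ∃ δ : ℝ, 0 < δ ∧ ∀ y : ℤ → M,
    (∀ n : ℤ, dist (f (y n)) (y (n + 1)) < δ) →
      ∃ z : M, ∀ n : ℤ, dist ((f ^ n) z) (y n) ≤ ε

/-- A rectangle: a nonempty set of diameter `< δ` closed under the bracket operation. -/
def IsRectangle (δ : ℝ) (br : M → M → M) (R : Set M) : Prop :=
  R.Nonempty ∧ Metric.diam R < δ ∧ ∀ x ∈ R, ∀ y ∈ R, br x y ∈ R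

/-- Stable border `∂^s R`: points of `R` that are not interior points of
`W^u(x,R) = W^u_ε(x) ∩ R` in the subspace topology of `W^u_ε(x)`. -/
def stableBorder (f : Equiv.Perm M) (ε : ℝ) (R : Set M) : Set M :=
  {x : M | x ∈ R ∧ ¬ ∃ U : Set M, IsOpen U ∧ x ∈ U ∧ U ∩ epsUnstable f ε x ⊆ R}

/-- Unstable border `∂^u R`: points of `R` that are not interior points of
`W^s(x,R) = W^s_ε(x) ∩ R` in the subspace topology of `W^s_ε(x)`. -/
def unstableBorder (f : Equiv.Perm M) (ε : ℝ) (R : Set M) : Set M :=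
  {x : M | x ∈ R ∧ ¬ ∃ U : Set M, IsOpen U ∧ x ∈ U ∧ U ∩ epsStable f ε x ⊆ R}

/-- A Markov partition: a finite family of proper rectangles covering `M`, with pairwise
disjoint interiors, satisfying the Markov inclusions for the invariant fibers. -/
def IsMarkovPartition (f : Equiv.Perm M) (ε δ : ℝ) (br : M → M → M) {m : ℕ}
    (R : Fin m → Set M) : Prop :=
  (∀ i, IsRectangle δ br (R i)) ∧
  (∀ i, R i = closure (interior (R i))) ∧
  (⋃ i, R i) = Set.univ ∧
  (∀ i j, i ≠ j → interior (R i) ∩ interior (R j) = ∅) ∧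
  ∀ i j, ∀ x ∈ interior (R i) ∩ ⇑f ⁻¹' interior (R j),
    ⇑f '' (epsStable f ε x ∩ R i) ⊆ epsStable f ε (f x) ∩ R j ∧
    epsUnstable f ε (f x) ∩ R j ⊆ ⇑f '' (epsUnstable f ε x ∩ R i)

def OrbitShadows {X : Type*} [PseudoMetricSpace X] (f : Equiv.Perm X) (β : ℝ) (x : X)
    (q : ℤ → X) : Prop :=
  ∀ n : ℤ, dist ((f ^ n) x) (q n) ≤ β

theorem OrbitShadows.apply_shift {X : Type*} [PseudoMetricSpace X] {f : Equiv.Perm X} {β : ℝ}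
    {x : X} {q : ℤ → X} (h : OrbitShadows f β x q) :
    OrbitShadows f β (f x) (fun n => q (n + 1)) := fun n => by
  rw [← Equiv.Perm.mul_apply, ← zpow_add_one]
  exact h (n + 1)

theorem Equiv.Perm.continuous_zpow {X : Type*} [TopologicalSpace X] (f : Equiv.Perm X)
    (hf : Continuous f) (hf' : Continuous f.symm) (n : ℤ) : Continuous ⇑(f ^ n) := by
  induction n using Int.induction_on with
  | zero => exact continuous_id
  | succ k ih => rw [zpow_add_one, Equiv.Perm.coe_mul]; exact ih.comp hf
  | pred k ih => rw [zpow_sub_one, Equiv.Perm.coe_mul]; exact ih.comp hf'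

namespace IsExpansiveWith

variable {X : Type*} [MetricSpace X] {f : Equiv.Perm X} {ρ : ℝ}

theorem eq_of_orbitShadows (hexp : IsExpansiveWith f ρ) {β : ℝ} (hβ : 2 * β ≤ ρ)
    {q : ℤ → X} {x y : X} (hx : OrbitShadows f β x q) (hy : OrbitShadows f β y q) : x = y :=
  hexp x y fun n => by linarith [dist_triangle_right ((f ^ n) x) ((f ^ n) y) (q n), hx n, hy n]

theorem exists_dist_lt [CompactSpace X] (hf : Continuous f) (hf' : Continuous f.symm)
    (hexp : IsExpansiveWith f ρ) {ε : ℝ} (hε : 0 < ε) :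
    ∃ N : ℕ, ∀ x y : X, (∀ n ∈ Finset.Icc (-N : ℤ) N, dist ((f ^ n) x) ((f ^ n) y) ≤ ρ) →
      dist x y < ε := by
  let Z : ℕ → Set (X × X) := fun N => {p | ε ≤ dist p.1 p.2} ∩
    ⋂ n ∈ Finset.Icc (-N : ℤ) N, {p | dist ((f ^ n) p.1) ((f ^ n) p.2) ≤ ρ}
  have hZ_closed (N : ℕ) : IsClosed (Z N) := by
    have hfn (n : ℤ) := f.continuous_zpow hf hf' n
    exact (isClosed_le continuous_const (continuous_fst.dist continuous_snd)).inter <|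
      isClosed_biInter fun n _ =>
        isClosed_le (((hfn n).comp continuous_fst).dist ((hfn n).comp continuous_snd))
          continuous_const
  have hZ_anti : Antitone Z := fun N N' hN => by
    refine inter_subset_inter_right _ (biInter_subset_biInter_left fun n hn => ?_)
    simp only [Finset.coe_Icc, mem_Icc] at hn ⊢
    omega
  have hZ_empty : univ ∩ ⋂ N, Z N = ∅ := by
    refine eq_empty_of_forall_notMem fun p ⟨_, hp⟩ => ?_
    rw [mem_iInter] at hp
    have hp_eq : p.1 = p.2 := hexp _ _ fun n =>
      mem_iInter₂.1 (hp n.natAbs).2 n (by simp only [Finset.mem_Icc]; omega)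
    have h0 : ε ≤ dist p.1 p.2 := (hp 0).1
    rw [hp_eq, dist_self] at h0
    linarith
  obtain ⟨N, hN⟩ :=
    isCompact_univ.elim_directed_family_closed Z hZ_closed hZ_empty hZ_anti.directed_ge
  refine ⟨N, fun x y hxy => not_le.1 fun hεxy => ?_⟩
  exact hN.subset ⟨mem_univ (x, y), hεxy, mem_iInter₂.2 hxy⟩

theorem continuousOn_of_orbitShadows [CompactSpace X] (hf : Continuous f)
    (hf' : Continuous f.symm) (hexp : IsExpansiveWith f ρ) {β : ℝ} (hβ : 2 * β < ρ)
    {S : Set (ℤ → X)} {θ : (ℤ → X) → X} (hθ : ∀ q ∈ S, OrbitShadows f β (θ q) q) : ContinuousOn θ S := by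
  intro q hq
  refine Metric.tendsto_nhds.2 fun ε hε => ?_
  obtain ⟨N, hN⟩ := hexp.exists_dist_lt hf hf' hε
  have hnear : ∀ᶠ q' in 𝓝[S] q, ∀ n ∈ Finset.Icc (-N : ℤ) N, dist (q' n) (q n) < ρ - 2 * β :=
    (eventually_all_finset _).2 fun n _ => nhdsWithin_le_nhds <|
      (continuous_apply n).continuousAt.eventually (ball_mem_nhds (q n) (by linarith))
  filter_upwards [hnear, self_mem_nhdsWithin] with q' hq'_near hq'
  refine hN _ _ fun n hn => ?_
  linarith [dist_triangle4 ((f ^ n) (θ q')) (q' n) (q n) ((f ^ n) (θ q)), hθ q' hq' n,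
    hq'_near n hn, hθ q hq n, dist_comm ((f ^ n) (θ q)) (q n)]

end IsExpansiveWith

theorem stmt_14_general (f : Equiv.Perm M) (hf : Continuous ⇑f) (hf' : Continuous ⇑f.symm)
    (ρ : ℝ) (hexp : IsExpansiveWith f ρ)
    (β α : ℝ) (hβ : β < ρ / 2)
    {m : ℕ} (p : Fin m → M)
    (θ : (ℤ → M) → M)
    (hθ : ∀ q : ℤ → M, (∀ n : ℤ, ∃ i : Fin m, q n = p i) →
      (∀ n : ℤ, dist (f (q n)) (q (n + 1)) < α) →
      ∀ n : ℤ, dist ((f ^ n) (θ q)) (q n) ≤ β) :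
    ContinuousOn θ {q : ℤ → M | (∀ n : ℤ, ∃ i : Fin m, q n = p i) ∧
      ∀ n : ℤ, dist (f (q n)) (q (n + 1)) < α} ∧
    ∀ q : ℤ → M, (∀ n : ℤ, ∃ i : Fin m, q n = p i) →
      (∀ n : ℤ, dist (f (q n)) (q (n + 1)) < α) →
      f (θ q) = θ (fun n => q (n + 1)) := by
  have hβρ : 2 * β < ρ := by linarith
  refine ⟨hexp.continuousOn_of_orbitShadows hf hf' hβρ fun q hq => hθ q hq.1 hq.2,
    fun q hqP hqα => ?_⟩
  exact hexp.eq_of_orbitShadows hβρ.le (OrbitShadows.apply_shift (hθ q hqP hqα))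
    (hθ _ (fun n => hqP (n + 1)) fun n => hqα (n + 1))

/-- The map `θ : Σ(P) → M` (given by its defining shadowing property) is
continuous on `Σ(P)` (with the product topology on `ℤ → M`, which induces on `Σ(P)` the
product of the discrete topologies on the finite set `P`) and satisfies
`f(θ(q)) = θ(σ(q))` for all `q ∈ Σ(P)`. -/
theorem stmt_14 (f : Equiv.Perm M) (hf : Continuous ⇑f) (hf' : Continuous ⇑f.symm)
    (ρ : ℝ) (hρ : 0 < ρ) (hexp : IsExpansiveWith f ρ)
    (β α γ : ℝ) (hβ0 : 0 < β) (hβ : β < ρ / 2) (hα0 : 0 < α)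
    (hshad : ∀ y : ℤ → M, (∀ n : ℤ, dist (f (y n)) (y (n + 1)) < α) →
      ∃ z : M, ∀ n : ℤ, dist ((f ^ n) z) (y n) ≤ β)
    (hγ0 : 0 < γ) (hγβ : γ < β) (hγα : γ < α / 2)
    (hγ : ∀ x y : M, dist x y < γ → dist (f x) (f y) < α / 2)
    {m : ℕ} (p : Fin m → M) (hP : ∀ x : M, ∃ i : Fin m, dist x (p i) < γ)
    (θ : (ℤ → M) → M)
    (hθ : ∀ q : ℤ → M, (∀ n : ℤ, ∃ i : Fin m, q n = p i) →
      (∀ n : ℤ, dist (f (q n)) (q (n + 1)) < α) →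
      ∀ n : ℤ, dist ((f ^ n) (θ q)) (q n) ≤ β) :
    ContinuousOn θ {q : ℤ → M | (∀ n : ℤ, ∃ i : Fin m, q n = p i) ∧
      ∀ n : ℤ, dist (f (q n)) (q (n + 1)) < α} ∧
    ∀ q : ℤ → M, (∀ n : ℤ, ∃ i : Fin m, q n = p i) →
      (∀ n : ℤ, dist (f (q n)) (q (n + 1)) < α) →
      f (θ q) = θ (fun n => q (n + 1)) :=
  stmt_14_general f hf hf' ρ hexp β α hβ p θ hθ
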